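/- arXiv:2404.02343 — 2 statements merged into one kernel-verified Lean document; each statement's English description precedes it below -/
import Mathlib

section
/- If μ is a probability measure on ℝ^d whose j-th marginal μ_j differs from ν_j for some j, then Φ*(μ) = sup_{f ∈ C_b}{∫f dμ − Φ(f)} = +∞. -/
/-! Bounded continuous functions separate probability measures on `ℝ`, so some `h` with
`∫ h dν_j = 0` has `δ = ∫ h dμ_j > 0`. The payoff `λ h(x_j)` is superhedged at cost zero by
holding `λ h` in asset `j` alone, so `Φ` of it is at most `0`, while its `μ`-integral is `λ δ`;
letting `λ → ∞` makes `∫ f dμ - Φ(f)` unbounded. -/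

open MeasureTheory BoundedContinuousFunction Pointwise

noncomputable section

/-- A trading strategy: single-asset positions `ψ_j` (continuous bounded functions on `ℝ`)
and positions `b_i` in the traded multi-asset options. -/
abbrev Strat (d : ℕ) (ι : Type) := (Fin d → (ℝ →ᵇ ℝ)) × (ι → ℝ)

/-- Payoff of the strategy `s` at `x`: `Σ_j ψ_j(x_j) + Σ_i b_i φ_i(x)`. -/
def payoff {d : ℕ} {ι : Type} [Fintype ι] (φ : ι → ((Fin d → ℝ) →ᵇ ℝ))
    (s : Strat d ι) (x : Fin d → ℝ) : ℝ :=
  (∑ j, s.1 j (x j)) + ∑ i, s.2 i * φ i x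

/-- The superhedging set `Θ(f)`. -/
def Theta {d : ℕ} {ι : Type} [Fintype ι] (φ : ι → ((Fin d → ℝ) →ᵇ ℝ))
    (f : (Fin d → ℝ) → ℝ) : Set (Strat d ι) :=
  {s | ∀ x, f x ≤ payoff φ s x}

/-- The cost `π(ψ,b) = Σ_j ∫ ψ_j dν_j + Σ_i b_i p_i` of a strategy. -/
def cost {d : ℕ} {ι : Type} [Fintype ι] (ν : Fin d → Measure ℝ) (p : ι → ℝ)
    (s : Strat d ι) : ℝ :=
  (∑ j, ∫ y, s.1 j y ∂(ν j)) + ∑ i, s.2 i * p i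

/-- The superhedging price functional `Φ(f)`. -/
def Phi {d : ℕ} {ι : Type} [Fintype ι] (ν : Fin d → Measure ℝ)
    (φ : ι → ((Fin d → ℝ) →ᵇ ℝ)) (p : ι → ℝ) (f : (Fin d → ℝ) → ℝ) : ℝ :=
  sInf (cost ν p '' Theta φ f)

/-- The calibration set `Q`: probability measures with marginals `ν_j` matching the
prices `p_i` of the payoffs `φ_i`. -/
def calib {d : ℕ} {ι : Type} [Fintype ι] (ν : Fin d → Measure ℝ)
    (φ : ι → ((Fin d → ℝ) →ᵇ ℝ)) (p : ι → ℝ) : Set (Measure (Fin d → ℝ)) :=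
  {μ | IsProbabilityMeasure μ ∧ (∀ j, μ.map (fun x => x j) = ν j) ∧
        ∀ i, ∫ x, φ i x ∂μ = p i}

/-- Existence of a uniform strong arbitrage. -/
def USA {d : ℕ} {ι : Type} [Fintype ι] (ν : Fin d → Measure ℝ)
    (φ : ι → ((Fin d → ℝ) →ᵇ ℝ)) (p : ι → ℝ) : Prop :=
  ∃ (s : Strat d ι) (ε : ℝ), 0 < ε ∧ (∀ x, ε ≤ payoff φ s x) ∧ cost ν p s ≤ 0

lemma exists_integral_eq_zero_lt_integral {Ω : Type*} [MeasurableSpace Ω] [TopologicalSpace Ω]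
    [HasOuterApproxClosed Ω] [BorelSpace Ω] {μ ν : Measure Ω} [IsProbabilityMeasure μ]
    [IsProbabilityMeasure ν] (hne : μ ≠ ν) :
    ∃ h : Ω →ᵇ ℝ, ∫ x, h x ∂ν = 0 ∧ 0 < ∫ x, h x ∂μ := by
  have centered : ∀ (m : Measure Ω) [IsProbabilityMeasure m] (g : Ω →ᵇ ℝ) (c : ℝ),
      ∫ x, (g - const Ω c) x ∂m = ∫ x, g x ∂m - c := fun m _ g c => by
    simp [integral_sub (g.integrable m) (integrable_const c)]
  by_contra! hle
  refine hne (ext_of_forall_integral_eq_of_IsFiniteMeasure fun g => ?_)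
  set g₀ := g - const Ω (∫ x, g x ∂ν)
  have hg₀ : ∫ x, g₀ x ∂ν = 0 := by rw [centered, sub_self]
  have upper := hle g₀ hg₀
  have lower := hle (-g₀) (by simp only [coe_neg, Pi.neg_apply, integral_neg, hg₀, neg_zero])
  simp only [coe_neg, Pi.neg_apply, integral_neg, neg_nonpos] at lower
  rw [centered] at upper lower
  linarith

section Strategies

variable {d : ℕ} {ι : Type} [Fintype ι]

def Strat.single (j : Fin d) (ψ : ℝ →ᵇ ℝ) : Strat d ι := (Pi.single j ψ, 0)

lemma payoff_single (φ : ι → ((Fin d → ℝ) →ᵇ ℝ)) (j : Fin d) (ψ : ℝ →ᵇ ℝ) (x : Fin d → ℝ) :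
    payoff φ (Strat.single j ψ) x = ψ (x j) := by
  rw [payoff, Fintype.sum_eq_single j fun i hi => by simp [Strat.single, Pi.single_eq_of_ne hi]]
  simp [Strat.single]

lemma cost_single (ν : Fin d → Measure ℝ) (p : ι → ℝ) (j : Fin d) (ψ : ℝ →ᵇ ℝ) :
    cost ν p (Strat.single j ψ) = ∫ y, ψ y ∂(ν j) := by
  rw [cost, Fintype.sum_eq_single j fun i hi => by simp [Strat.single, Pi.single_eq_of_ne hi]]
  simp [Strat.single]

/-- `Phi` is a real `sInf`, which is `0` when the costs are unbounded below: hence the sign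
condition. -/
lemma Phi_le_cost {ν : Fin d → Measure ℝ} {φ : ι → ((Fin d → ℝ) →ᵇ ℝ)} {p : ι → ℝ}
    {f : (Fin d → ℝ) → ℝ} {s : Strat d ι} (hs : s ∈ Theta φ f) (hcost : 0 ≤ cost ν p s) :
    Phi ν φ p f ≤ cost ν p s := by
  by_cases hbdd : BddBelow (cost ν p '' Theta φ f)
  · exact csInf_le hbdd ⟨s, hs, rfl⟩
  · rwa [Phi, Real.sInf_of_not_bddBelow hbdd]

lemma Phi_comp_eval_le_integral (ν : Fin d → Measure ℝ) (φ : ι → ((Fin d → ℝ) →ᵇ ℝ))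
    (p : ι → ℝ) (j : Fin d) (ψ : ℝ →ᵇ ℝ) (hψ : 0 ≤ ∫ y, ψ y ∂(ν j)) :
    Phi ν φ p (fun x => ψ (x j)) ≤ ∫ y, ψ y ∂(ν j) := by
  rw [← cost_single ν p j ψ] at hψ ⊢
  exact Phi_le_cost (fun x => (payoff_single φ j ψ x).ge) hψ

end Strategies

/-- if some marginal of the probability measure `μ` differs from `ν_j`,
then `Φ*(μ) = sup_f {∫ f dμ - Φ(f)} = +∞`. -/
theorem conjugate_infinite_of_marginal_mismatch {d : ℕ} {ι : Type} [Fintype ι]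
    (ν : Fin d → Measure ℝ) [∀ j, IsProbabilityMeasure (ν j)]
    (φ : ι → ((Fin d → ℝ) →ᵇ ℝ)) (p : ι → ℝ)
    (μ : Measure (Fin d → ℝ)) [IsProbabilityMeasure μ]
    (hmarg : ∃ j, μ.map (fun x => x j) ≠ ν j) :
    (⨆ f : (Fin d → ℝ) →ᵇ ℝ, (((∫ x, f x ∂μ) - Phi ν φ p ⇑f : ℝ) : EReal)) = ⊤ := by
  obtain ⟨j, hj⟩ := hmarg
  have hproj : AEMeasurable (fun x : Fin d → ℝ => x j) μ := (measurable_pi_apply j).aemeasurable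
  have := Measure.isProbabilityMeasure_map (μ := μ) hproj
  obtain ⟨h, hν, hμ⟩ := exists_integral_eq_zero_lt_integral hj
  refine (EReal.eq_top_iff_forall_lt _).2 fun r => lt_iSup_iff.2 ?_
  set δ := ∫ y, h y ∂(μ.map fun x => x j)
  set F := (((r + 1) / δ) • h).compContinuous (ContinuousMap.eval (X := fun _ : Fin d => ℝ) j)
  have hF : ∫ x, F x ∂μ = r + 1 := by
    simp only [F, compContinuous_apply, ContinuousMap.eval_apply, coe_smul, smul_eq_mul]
    rw [integral_const_mul, ← integral_map hproj h.continuous.aestronglyMeasurable,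
      div_mul_cancel₀ _ hμ.ne']
  have hψ : ∫ y, (((r + 1) / δ) • h) y ∂(ν j) = 0 := by simp [integral_const_mul, hν]
  have hPhi : Phi ν φ p ⇑F ≤ 0 := (Phi_comp_eval_le_integral ν φ p j _ hψ.ge).trans_eq hψ
  refine ⟨F, EReal.coe_lt_coe_iff.2 ?_⟩
  linarith
end
end

section
/- Characterization of optimal measures: let f : ℝ^d → ℝ be bounded, Q ≠ ∅, and suppose there exists an optimal superhedging strategy (ψ, b) ∈ Θ(f) attaining Φ(f) = π(ψ, b). Then for μ* ∈ Q the following are equivalent: (1) there exists (ψ, b) ∈ Θ(f) such that Σ_j ψ_j(x_j) + Σ_i b_i φ_i(x) = f(x) for μ*-almost every x ∈ ℝ^d; (2) μ* is optimal, i.e. Φ(f) = ∫f dμ*. -/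
open MeasureTheory BoundedContinuousFunction Pointwise

noncomputable section

section AuxLemmas
variable {d : ℕ} {ι : Type} [Fintype ι] (φ : ι → ((Fin d → ℝ) →ᵇ ℝ))

lemma integrable_comp' (μ : Measure (Fin d → ℝ)) [IsFiniteMeasure μ] (g : ℝ →ᵇ ℝ) (j : Fin d) :
    Integrable (fun x => g (x j)) μ :=
  (g.compContinuous (ContinuousMap.mk (fun x : Fin d → ℝ => x j) (continuous_apply j))).integrable μ

lemma payoff_integrable' (μ : Measure (Fin d → ℝ)) [IsFiniteMeasure μ] (s : Strat d ι) :
    Integrable (payoff φ s) μ := by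
  unfold payoff
  exact (integrable_finset_sum _ (fun j _ => integrable_comp' μ (s.1 j) j)).add
    (integrable_finset_sum _ (fun i _ => ((φ i).integrable μ).const_mul _))

lemma integral_payoff' (ν : Fin d → Measure ℝ) (p : ι → ℝ)
    (μ : Measure (Fin d → ℝ)) (hP : IsProbabilityMeasure μ)
    (hmarg : ∀ j, μ.map (fun x => x j) = ν j) (hpr : ∀ i, ∫ x, φ i x ∂μ = p i)
    (s : Strat d ι) :
    ∫ x, payoff φ s x ∂μ = cost ν p s := by
  unfold payoff cost
  rw [integral_add (integrable_finset_sum _ (fun j _ => integrable_comp' μ (s.1 j) j))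
      (integrable_finset_sum _ (fun i _ => ((φ i).integrable μ).const_mul _)),
    integral_finset_sum _ (fun j _ => integrable_comp' μ (s.1 j) j),
    integral_finset_sum _ (fun i _ => ((φ i).integrable μ).const_mul _)]
  congr 1
  · refine Finset.sum_congr rfl fun j _ => ?_
    rw [← hmarg j, integral_map (measurable_pi_apply j).aemeasurable
      ((s.1 j).continuous.measurable.aestronglyMeasurable)]
  · refine Finset.sum_congr rfl fun i _ => ?_
    rw [integral_const_mul, hpr i]

end AuxLemmas

/-- characterization of optimal measures: for `μ* ∈ Q`, existence of a
superhedging strategy matching `f` `μ*`-a.e. is equivalent to optimality of `μ*`. -/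
theorem optimal_measure_characterization {d : ℕ} {ι : Type} [Fintype ι]
    (ν : Fin d → Measure ℝ) [∀ j, IsProbabilityMeasure (ν j)]
    (φ : ι → ((Fin d → ℝ) →ᵇ ℝ)) (p : ι → ℝ)
    (f : (Fin d → ℝ) → ℝ) (hfm : Measurable f) (hfb : ∃ C, ∀ x, |f x| ≤ C)
    (hQ : (calib ν φ p).Nonempty)
    (hopt : ∃ s ∈ Theta φ f, cost ν p s = Phi ν φ p f)
    (μstar : Measure (Fin d → ℝ)) (hμ : μstar ∈ calib ν φ p) :
    (∃ s ∈ Theta φ f, ∀ᵐ x ∂μstar, payoff φ s x = f x) ↔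
      Phi ν φ p f = ∫ x, f x ∂μstar := by
  obtain ⟨C, hC⟩ := hfb
  obtain ⟨hP, hmarg, hpr⟩ := hμ
  have hint : ∀ (μ : Measure (Fin d → ℝ)), IsProbabilityMeasure μ → Integrable f μ := by
    intro μ hPμ
    exact (integrable_const C).mono' hfm.aestronglyMeasurable
      (Filter.Eventually.of_forall fun x => by simpa using hC x)
  have key : ∀ μ ∈ calib ν φ p, ∀ s ∈ Theta φ f, ∫ x, f x ∂μ ≤ cost ν p s := by
    intro μ hμ' s hs
    obtain ⟨hP', hmarg', hpr'⟩ := hμ'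
    calc ∫ x, f x ∂μ ≤ ∫ x, payoff φ s x ∂μ :=
          integral_mono (hint μ hP') (payoff_integrable' φ μ s) hs
      _ = cost ν p s := integral_payoff' φ ν p μ hP' hmarg' hpr' s
  have hbdd : BddBelow (cost ν p '' Theta φ f) := by
    obtain ⟨μ0, hμ0⟩ := hQ
    exact ⟨∫ x, f x ∂μ0, by rintro _ ⟨s, hs, rfl⟩; exact key μ0 hμ0 s hs⟩
  obtain ⟨s0, hs0, hcost0⟩ := hopt
  have hne : (cost ν p '' Theta φ f).Nonempty := ⟨_, ⟨s0, hs0, rfl⟩⟩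
  have hlow : ∫ x, f x ∂μstar ≤ Phi ν φ p f :=
    le_csInf hne (by rintro _ ⟨s, hs, rfl⟩; exact key μstar ⟨hP, hmarg, hpr⟩ s hs)
  constructor
  · rintro ⟨s, hs, hae⟩
    have h1 : ∫ x, f x ∂μstar = cost ν p s := by
      rw [← integral_payoff' φ ν p μstar hP hmarg hpr s]
      exact integral_congr_ae (hae.mono fun x h => h.symm)
    have h2 : Phi ν φ p f ≤ cost ν p s := csInf_le hbdd ⟨s, hs, rfl⟩
    linarith
  · intro heq
    refine ⟨s0, hs0, ?_⟩
    have hI : ∫ x, (payoff φ s0 x - f x) ∂μstar = 0 := by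
      rw [integral_sub (payoff_integrable' φ μstar s0) (hint μstar hP),
        integral_payoff' φ ν p μstar hP hmarg hpr s0, hcost0, heq, sub_self]
    have hz := (integral_eq_zero_iff_of_nonneg (fun x => sub_nonneg.mpr (hs0 x))
      ((payoff_integrable' φ μstar s0).sub (hint μstar hP))).mp hI
    filter_upwards [hz] with x hx
    have hx' : payoff φ s0 x - f x = 0 := hx
    linarith
end
end
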